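/- Third mixed pentagon relation: S₁₂ · S''₁₃ · S''₂₃ = S''₂₃ · S₁₂ as matrices on V × V × V, where S'' := (S^{t₂})⁻¹. -/
import Mathlib


open Matrix BigOperators

/-- Matrix on `V × V × V` acting as `T` on the first and second factors. -/
def lift12 {k V : Type*} [Semiring k] [DecidableEq V]
    (T : Matrix (V × V) (V × V) k) : Matrix (V × V × V) (V × V × V) k :=
  Matrix.of fun p q =>
    T (p.1, p.2.1) (q.1, q.2.1) * (if p.2.2 = q.2.2 then 1 else 0)

/-- Matrix on `V × V × V` acting as `T` on the first and third factors. -/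
def lift13 {k V : Type*} [Semiring k] [DecidableEq V]
    (T : Matrix (V × V) (V × V) k) : Matrix (V × V × V) (V × V × V) k :=
  Matrix.of fun p q =>
    T (p.1, p.2.2) (q.1, q.2.2) * (if p.2.1 = q.2.1 then 1 else 0)

/-- Matrix on `V × V × V` acting as `T` on the second and third factors. -/
def lift23 {k V : Type*} [Semiring k] [DecidableEq V]
    (T : Matrix (V × V) (V × V) k) : Matrix (V × V × V) (V × V × V) k :=
  Matrix.of fun p q =>
    T (p.2.1, p.2.2) (q.2.1, q.2.2) * (if p.1 = q.1 then 1 else 0)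

/-- Partial transposition in the first factor: `T^{t₁}_{(a,b),(c,d)} = T_{(c,b),(a,d)}`. -/
def pt1 {k V : Type*} (T : Matrix (V × V) (V × V) k) : Matrix (V × V) (V × V) k :=
  Matrix.of fun p q => T (q.1, p.2) (p.1, q.2)

/-- Partial transposition in the second factor: `T^{t₂}_{(a,b),(c,d)} = T_{(a,d),(c,b)}`. -/
def pt2 {k V : Type*} (T : Matrix (V × V) (V × V) k) : Matrix (V × V) (V × V) k :=
  Matrix.of fun p q => T (p.1, q.2) (q.1, p.2)

section Aux

variable {k V : Type*} [Field k] [Fintype V] [DecidableEq V]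

lemma lift13_mul' (A B : Matrix (V × V) (V × V) k) :
    lift13 A * lift13 B = lift13 (A * B) := by
  ext ⟨a,b,c⟩ ⟨d,e,f⟩
  simp [lift13, Matrix.mul_apply, Fintype.sum_prod_type, mul_ite, ite_mul,
    Finset.sum_ite_eq, Finset.sum_ite_eq']

lemma lift23_mul' (A B : Matrix (V × V) (V × V) k) :
    lift23 A * lift23 B = lift23 (A * B) := by
  ext ⟨a,b,c⟩ ⟨d,e,f⟩
  simp [lift23, Matrix.mul_apply, Fintype.sum_prod_type, mul_ite, ite_mul,
    Finset.sum_ite_eq, Finset.sum_ite_eq']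

lemma lift13_one' : lift13 (1 : Matrix (V × V) (V × V) k) = 1 := by
  ext ⟨a,b,c⟩ ⟨d,e,f⟩
  simp only [lift13, Matrix.one_apply, Matrix.of_apply, Prod.ext_iff]
  split_ifs <;> simp_all

lemma lift23_one' : lift23 (1 : Matrix (V × V) (V × V) k) = 1 := by
  ext ⟨a,b,c⟩ ⟨d,e,f⟩
  simp only [lift23, Matrix.one_apply, Matrix.of_apply, Prod.ext_iff]
  split_ifs <;> simp_all

lemma sum_comm3' {M : Type*} [AddCommMonoid M] (g : V → V → V → M) :
    (∑ x, ∑ y, ∑ z, g x y z) = ∑ z, ∑ y, ∑ x, g x y z := by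
  calc (∑ x, ∑ y, ∑ z, g x y z) = ∑ y, ∑ x, ∑ z, g x y z := Finset.sum_comm
    _ = ∑ y, ∑ z, ∑ x, g x y z :=
        Finset.sum_congr rfl fun _ _ => Finset.sum_comm
    _ = ∑ z, ∑ y, ∑ x, g x y z := Finset.sum_comm

lemma mixed_key (S : Matrix (V × V) (V × V) k)
    (hpent : lift12 S * lift13 S * lift23 S = lift23 S * lift12 S) :
    lift23 (pt2 S) * lift12 S = lift12 S * lift23 (pt2 S) * lift13 (pt2 S) := by
  ext ⟨a,b,c⟩ ⟨d,e,f⟩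
  have h := congrFun (congrFun hpent (a,b,f)) (d,e,c)
  simp [lift12, lift13, lift23, pt2, Matrix.mul_apply, Fintype.sum_prod_type,
    mul_ite, ite_mul, Finset.sum_ite_eq, Finset.sum_ite_eq',
    Finset.mul_sum, Finset.sum_mul] at h ⊢
  rw [← h, sum_comm3']
  exact Finset.sum_congr rfl fun _ _ => Finset.sum_congr rfl fun _ _ =>
    Finset.sum_congr rfl fun _ _ => by ring

end Aux

theorem mixed_pentagon_three
    {k V : Type*} [Field k] [Fintype V] [DecidableEq V]
    (S : Matrix (V × V) (V × V) k)
    (hSinv : IsUnit S) (hSt2inv : IsUnit (pt2 S))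
    (hpent : lift12 S * lift13 S * lift23 S = lift23 S * lift12 S) :
    lift12 S * lift13 (pt2 S)⁻¹ * lift23 (pt2 S)⁻¹ = lift23 (pt2 S)⁻¹ * lift12 S := by
  set B := pt2 S with hBdef
  have hdet : IsUnit B.det := (Matrix.isUnit_iff_isUnit_det _).mp hSt2inv
  have hB1 : B * B⁻¹ = 1 := Matrix.mul_nonsing_inv _ hdet
  have hB2 : B⁻¹ * B = 1 := Matrix.nonsing_inv_mul _ hdet
  have h13a : lift13 B * lift13 B⁻¹ = 1 := by rw [lift13_mul', hB1, lift13_one']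
  have h23a : lift23 B * lift23 B⁻¹ = 1 := by rw [lift23_mul', hB1, lift23_one']
  have h23b : lift23 B⁻¹ * lift23 B = 1 := by rw [lift23_mul', hB2, lift23_one']
  have C' := mixed_key S hpent
  have key : lift23 B * lift12 S * lift13 B⁻¹ = lift12 S * lift23 B := by
    rw [C', mul_assoc, h13a, mul_one]
  have step : lift12 S * lift13 B⁻¹ = lift23 B⁻¹ * (lift12 S * lift23 B) := by
    rw [← key, ← mul_assoc, ← mul_assoc, h23b, one_mul]
  rw [step, mul_assoc, mul_assoc, h23a, mul_one]
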